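/- Let (Ω, F, μ) be a probability space, let n be a positive integer, let y ∈ [0,1]^n, and let x : Ω → {0,1}^n be a random vector with E[x_j] = y_j for each j and such that for every subset S ⊆ {1,…,n}, E[ Π_{j∈S} (1 − x_j) ] ≤ Π_{j∈S} (1 − y_j). Let C be a finite index set and let Δ ≥ 1 be an integer; for each ℓ ∈ C let c_ℓ ≥ 0, b_ℓ > 0, let S_ℓ ⊆ {1,…,n} be nonempty with |S_ℓ| ≤ Δ, and let w_{ℓ,j} ∈ [0, b_ℓ] for j ∈ S_ℓ. Then E[ Σ_{ℓ∈C} c_ℓ · min{ b_ℓ , Σ_{j∈S_ℓ} w_{ℓ,j}·x_j } ] ≥ (1 − (1 − 1/Δ)^Δ) · Σ_{ℓ∈C} c_ℓ · min{ b_ℓ , Σ_{j∈S_ℓ} w_{ℓ,j}·y_j }. -/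

import Mathlib

open MeasureTheory Finset

/-!
Normalise a clause to `b = 1` with weights `a_j = w_j / b ∈ [0, 1]`. Its value
`min 1 (∑ a_j x_j)` dominates `1 - ∏ (1 - a_j x_j)` pointwise. Writing
`1 - a_j x_j = a_j (1 - x_j) + (1 - a_j)` expands this product into a nonnegative combination
of the products `∏_{j ∈ T} (1 - x_j)`, so negative correlation gives
`E ∏ (1 - a_j x_j) ≤ ∏ (1 - a_j y_j)`. Padding the at most `Δ` factors with ones, AM-GM
bounds `∏ (1 - a_j y_j)` by `(1 - t / Δ) ^ Δ` with `t = ∑ a_j y_j`, and the concave function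
`t ↦ 1 - (1 - t / Δ) ^ Δ` vanishes at `0` and equals `α` at `1`, so it is at least
`α · min 1 t`.
-/

noncomputable def sandwichConst (m : ℕ) : ℝ := 1 - (1 - 1 / (m : ℝ)) ^ m

section

variable {ι : Type*}

theorem one_sub_prod_one_sub_le_sum (s : Finset ι) (t : ι → ℝ)
    (ht : ∀ i ∈ s, t i ∈ Set.Icc (0 : ℝ) 1) :
    1 - ∏ i ∈ s, (1 - t i) ≤ ∑ i ∈ s, t i := by
  classical
  induction s using Finset.induction_on with
  | empty => simp
  | insert a s ha ih =>
    rw [prod_insert ha, sum_insert ha]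
    have hs : ∀ i ∈ s, t i ∈ Set.Icc (0 : ℝ) 1 := fun i hi => ht i (mem_insert_of_mem hi)
    have hP : ∏ i ∈ s, (1 - t i) ≤ 1 :=
      prod_le_one (fun i hi => sub_nonneg.2 (hs i hi).2) fun i hi => sub_le_self 1 (hs i hi).1
    nlinarith [ih hs, (ht a (mem_insert_self a s)).1]

theorem Real.prod_le_sum_div_card_pow (s : Finset ι) (z : ι → ℝ)
    (hz : ∀ i ∈ s, 0 ≤ z i) :
    ∏ i ∈ s, z i ≤ ((∑ i ∈ s, z i) / #s) ^ #s := by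
  rcases s.eq_empty_or_nonempty with rfl | hs
  · simp
  have hcard : (0 : ℝ) < #s := by exact_mod_cast hs.card_pos
  have h := Real.geom_mean_le_arith_mean_weighted s (fun _ => (#s : ℝ)⁻¹) z
    (fun _ _ => by positivity) (by simp [hcard.ne']) hz
  rw [Real.finsetProd_rpow s z hz, ← mul_sum, inv_mul_eq_div] at h
  calc ∏ i ∈ s, z i = ((∏ i ∈ s, z i) ^ (#s : ℝ)⁻¹) ^ #s :=
        (Real.rpow_inv_natCast_pow (prod_nonneg hz) hs.card_pos.ne').symm
    _ ≤ _ := pow_le_pow_left₀ (by positivity [prod_nonneg hz]) h _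

theorem prod_one_sub_le_one_sub_sum_div_pow (s : Finset ι) (t : ι → ℝ)
    (ht : ∀ i ∈ s, t i ≤ 1) {m : ℕ} (hm : #s ≤ m) :
    ∏ i ∈ s, (1 - t i) ≤ (1 - (∑ i ∈ s, t i) / m) ^ m := by
  rcases m.eq_zero_or_pos with rfl | hm0
  · simp [card_eq_zero.1 (Nat.le_zero.1 hm)]
  have h := Real.prod_le_sum_div_card_pow (s.disjSum (range (m - #s)))
    (Sum.elim (fun i => 1 - t i) 1) (by simpa using ht)
  rw [prod_disjSum, sum_disjSum, card_disjSum, card_range, Nat.add_sub_cancel' hm] at h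
  simp only [Sum.elim_inl, Sum.elim_inr, Pi.one_apply, prod_const_one, mul_one, sum_const,
    card_range, nsmul_eq_mul, sum_sub_distrib, Nat.cast_sub hm] at h
  convert h using 2
  field_simp
  ring

theorem sandwichConst_mul_min_le_one_sub_pow {m : ℕ} {t : ℝ} (ht0 : 0 ≤ t) (htm : t ≤ m) :
    sandwichConst m * min 1 t ≤ 1 - (1 - t / m) ^ m := by
  rw [sandwichConst]
  rcases le_total 1 t with h | h
  · rw [min_eq_left h, mul_one]
    have : (1 - t / m) ^ m ≤ (1 - 1 / m) ^ m :=
      pow_le_pow_left₀ (sub_nonneg.2 (div_le_one_of_le₀ htm m.cast_nonneg)) (by gcongr) m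
    linarith
  · rw [min_eq_right h]
    have hconvex := (convexOn_pow m).2 (Set.mem_Ici.2 zero_le_one)
      (Set.mem_Ici.2 (Nat.one_sub_one_div_cast_nonneg m)) (sub_nonneg.2 h) ht0 (sub_add_cancel 1 t)
    have hcomb : (1 - t) • (1 : ℝ) + t • (1 - 1 / (m : ℝ)) = 1 - t / m := by
      simp only [smul_eq_mul]; ring
    rw [hcomb, smul_eq_mul, smul_eq_mul] at hconvex
    simp only [one_pow, mul_one] at hconvex
    linarith

theorem sandwichConst_mul_min_sum_le_one_sub_prod (s : Finset ι) (t : ι → ℝ)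
    (ht : ∀ i ∈ s, t i ∈ Set.Icc (0 : ℝ) 1) {m : ℕ} (hm : #s ≤ m) :
    sandwichConst m * min 1 (∑ i ∈ s, t i) ≤ 1 - ∏ i ∈ s, (1 - t i) := by
  have hsum_nonneg : 0 ≤ ∑ i ∈ s, t i := sum_nonneg fun i hi => (ht i hi).1
  have hsum_le : ∑ i ∈ s, t i ≤ m :=
    calc ∑ i ∈ s, t i ≤ #s • (1 : ℝ) := sum_le_card_nsmul s t 1 fun i hi => (ht i hi).2
      _ ≤ m := by simpa using (Nat.cast_le (α := ℝ)).2 hm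
  linarith [sandwichConst_mul_min_le_one_sub_pow hsum_nonneg hsum_le,
    prod_one_sub_le_one_sub_sum_div_pow s t (fun i hi => (ht i hi).2) hm]

theorem min_eq_mul_min_one_sum_div {b : ℝ} (hb : 0 < b) (s : Finset ι) (w v : ι → ℝ) :
    min b (∑ j ∈ s, w j * v j) = b * min 1 (∑ j ∈ s, w j / b * v j) := by
  rw [mul_min_of_nonneg _ _ hb.le, mul_one, mul_sum]
  congr 1
  exact sum_congr rfl fun j _ => by field_simp

theorem prod_one_sub_mul_eq_sum_powerset [DecidableEq ι] (s : Finset ι) (a v : ι → ℝ) :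
    ∏ j ∈ s, (1 - a j * v j) =
      ∑ T ∈ s.powerset, ((∏ j ∈ T, a j) * ∏ j ∈ s \ T, (1 - a j)) * ∏ j ∈ T, (1 - v j) :=
  calc ∏ j ∈ s, (1 - a j * v j) = ∏ j ∈ s, (a j * (1 - v j) + (1 - a j)) :=
        prod_congr rfl fun j _ => by ring
    _ = _ := by
        rw [prod_add]
        exact sum_congr rfl fun T _ => by rw [prod_mul_distrib]; ring

section NegativeCorrelation

variable {Ω : Type*} [MeasurableSpace Ω] {μ : Measure Ω} {x : Ω → ι → ℝ} {y : ι → ℝ}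

theorem integral_prod_one_sub_mul_le
    (hint : ∀ T : Finset ι, Integrable (fun ω => ∏ j ∈ T, (1 - x ω j)) μ)
    (hneg : ∀ T : Finset ι, ∫ ω, ∏ j ∈ T, (1 - x ω j) ∂μ ≤ ∏ j ∈ T, (1 - y j))
    (s : Finset ι) {a : ι → ℝ} (ha : ∀ j ∈ s, a j ∈ Set.Icc (0 : ℝ) 1) :
    ∫ ω, ∏ j ∈ s, (1 - a j * x ω j) ∂μ ≤ ∏ j ∈ s, (1 - a j * y j) := by
  classical
  have hcoeff : ∀ T ∈ s.powerset, 0 ≤ (∏ j ∈ T, a j) * ∏ j ∈ s \ T, (1 - a j) := fun T hT =>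
    mul_nonneg (prod_nonneg fun j hj => (ha j (mem_powerset.1 hT hj)).1)
      (prod_nonneg fun j hj => sub_nonneg.2 (ha j (mem_sdiff.1 hj).1).2)
  simp_rw [prod_one_sub_mul_eq_sum_powerset s a]
  rw [integral_finsetSum _ fun T _ => (hint T).const_mul _]
  simp_rw [integral_const_mul]
  exact sum_le_sum fun T hT => mul_le_mul_of_nonneg_left (hneg T) (hcoeff T hT)

theorem integrable_prod_of_mem_Icc [IsFiniteMeasure μ] (s : Finset ι) {f : ι → Ω → ℝ}
    (hf : ∀ j ∈ s, Measurable (f j)) (hf01 : ∀ j ∈ s, ∀ ω, f j ω ∈ Set.Icc (0 : ℝ) 1) :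
    Integrable (fun ω => ∏ j ∈ s, f j ω) μ :=
  .of_mem_Icc 0 1 (Finset.measurable_prod s hf).aemeasurable (ae_of_all _ fun ω =>
    ⟨prod_nonneg fun j hj => (hf01 j hj ω).1,
      prod_le_one (fun j hj => (hf01 j hj ω).1) fun j hj => (hf01 j hj ω).2⟩)

theorem integrable_min_sum_mul [IsFiniteMeasure μ] (hx : Measurable x)
    (hx0 : ∀ ω j, 0 ≤ x ω j) {b : ℝ} (hb : 0 ≤ b) (s : Finset ι) {w : ι → ℝ}
    (hw : ∀ j ∈ s, 0 ≤ w j) :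
    Integrable (fun ω => min b (∑ j ∈ s, w j * x ω j)) μ :=
  .of_mem_Icc 0 b (by fun_prop) (ae_of_all _ fun ω =>
    ⟨le_min hb (sum_nonneg fun j hj => mul_nonneg (hw j hj) (hx0 ω j)), min_le_left _ _⟩)

variable [IsProbabilityMeasure μ]

theorem sandwichConst_mul_min_one_le_integral (hx : Measurable x)
    (hx01 : ∀ ω j, x ω j ∈ Set.Icc (0 : ℝ) 1)
    (hneg : ∀ T : Finset ι, ∫ ω, ∏ j ∈ T, (1 - x ω j) ∂μ ≤ ∏ j ∈ T, (1 - y j))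
    (s : Finset ι) (hy : ∀ j ∈ s, y j ∈ Set.Icc (0 : ℝ) 1) {a : ι → ℝ}
    (ha : ∀ j ∈ s, a j ∈ Set.Icc (0 : ℝ) 1) {m : ℕ} (hm : #s ≤ m) :
    sandwichConst m * min 1 (∑ j ∈ s, a j * y j) ≤ ∫ ω, min 1 (∑ j ∈ s, a j * x ω j) ∂μ := by
  have hax : ∀ ω, ∀ j ∈ s, a j * x ω j ∈ Set.Icc (0 : ℝ) 1 :=
    fun ω j hj => unitInterval.mul_mem (ha j hj) (hx01 ω j)
  have hint_prod : Integrable (fun ω => ∏ j ∈ s, (1 - a j * x ω j)) μ :=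
    integrable_prod_of_mem_Icc s (fun j _ => by fun_prop) fun j hj ω =>
      ⟨sub_nonneg.2 (hax ω j hj).2, sub_le_self 1 (hax ω j hj).1⟩
  have hint (T : Finset ι) : Integrable (fun ω => ∏ j ∈ T, (1 - x ω j)) μ :=
    integrable_prod_of_mem_Icc T (fun j _ => by fun_prop) fun j _ ω =>
      ⟨sub_nonneg.2 (hx01 ω j).2, sub_le_self 1 (hx01 ω j).1⟩
  calc sandwichConst m * min 1 (∑ j ∈ s, a j * y j) ≤ 1 - ∏ j ∈ s, (1 - a j * y j) :=
        sandwichConst_mul_min_sum_le_one_sub_prod s _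
          (fun j hj => unitInterval.mul_mem (ha j hj) (hy j hj)) hm
    _ ≤ 1 - ∫ ω, ∏ j ∈ s, (1 - a j * x ω j) ∂μ :=
        sub_le_sub_left (integral_prod_one_sub_mul_le hint hneg s ha) 1
    _ = ∫ ω, (1 - ∏ j ∈ s, (1 - a j * x ω j)) ∂μ := by
        rw [integral_sub (integrable_const 1) hint_prod, integral_const, probReal_univ, one_smul]
    _ ≤ ∫ ω, min 1 (∑ j ∈ s, a j * x ω j) ∂μ :=
        integral_mono ((integrable_const 1).sub hint_prod)
          (integrable_min_sum_mul hx (fun ω j => (hx01 ω j).1) zero_le_one s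
            fun j hj => (ha j hj).1)
          fun ω => le_min (sub_le_self 1 (prod_nonneg fun j hj => sub_nonneg.2 (hax ω j hj).2))
            (one_sub_prod_one_sub_le_sum s _ (hax ω))

theorem sandwichConst_mul_min_le_integral (hx : Measurable x)
    (hx01 : ∀ ω j, x ω j ∈ Set.Icc (0 : ℝ) 1)
    (hneg : ∀ T : Finset ι, ∫ ω, ∏ j ∈ T, (1 - x ω j) ∂μ ≤ ∏ j ∈ T, (1 - y j))
    (s : Finset ι) (hy : ∀ j ∈ s, y j ∈ Set.Icc (0 : ℝ) 1) {b : ℝ} (hb : 0 < b) {w : ι → ℝ}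
    (hw : ∀ j ∈ s, w j ∈ Set.Icc (0 : ℝ) b) {m : ℕ} (hm : #s ≤ m) :
    sandwichConst m * min b (∑ j ∈ s, w j * y j) ≤ ∫ ω, min b (∑ j ∈ s, w j * x ω j) ∂μ := by
  have ha : ∀ j ∈ s, w j / b ∈ Set.Icc (0 : ℝ) 1 := fun j hj =>
    ⟨div_nonneg (hw j hj).1 hb.le, div_le_one_of_le₀ (hw j hj).2 hb.le⟩
  simp_rw [min_eq_mul_min_one_sum_div hb s w]
  rw [integral_const_mul, mul_left_comm]
  exact mul_le_mul_of_nonneg_left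
    (sandwichConst_mul_min_one_le_integral hx hx01 hneg s hy ha hm) hb.le

end NegativeCorrelation

end

theorem wtp_sandwich_general
    (Ω : Type*) [MeasurableSpace Ω] (μ : Measure Ω) [IsProbabilityMeasure μ]
    (n : ℕ)
    (y : Fin n → ℝ) (hy : ∀ j, y j ∈ Set.Icc (0 : ℝ) 1)
    (x : Ω → Fin n → ℝ) (hmeas : Measurable x)
    (hbin : ∀ ω j, x ω j = 0 ∨ x ω j = 1)
    (hneg : ∀ S : Finset (Fin n),
      (∫ ω, ∏ j ∈ S, (1 - x ω j) ∂μ) ≤ ∏ j ∈ S, (1 - y j))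
    (C : Type*) [Fintype C] (Δ : ℕ)
    (c : C → ℝ) (hc : ∀ ℓ, 0 ≤ c ℓ)
    (b : C → ℝ) (hb : ∀ ℓ, 0 < b ℓ)
    (S : C → Finset (Fin n))
    (hScard : ∀ ℓ, (S ℓ).card ≤ Δ)
    (w : C → Fin n → ℝ) (hw : ∀ ℓ, ∀ j ∈ S ℓ, w ℓ j ∈ Set.Icc (0 : ℝ) (b ℓ)) :
    (1 - (1 - 1 / (Δ : ℝ)) ^ Δ) * ∑ ℓ, c ℓ * min (b ℓ) (∑ j ∈ S ℓ, w ℓ j * y j)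
      ≤ ∫ ω, ∑ ℓ, c ℓ * min (b ℓ) (∑ j ∈ S ℓ, w ℓ j * x ω j) ∂μ := by
  have hx01 : ∀ ω j, x ω j ∈ Set.Icc (0 : ℝ) 1 := fun ω j => by
    rcases hbin ω j with h | h <;> simp [h]
  have hclause (ℓ : C) := sandwichConst_mul_min_le_integral hmeas hx01 hneg (S ℓ)
    (fun j _ => hy j) (hb ℓ) (hw ℓ) (hScard ℓ)
  rw [integral_finsetSum _ fun ℓ _ => (integrable_min_sum_mul hmeas (fun ω j => (hx01 ω j).1)
    (hb ℓ).le (S ℓ) fun j hj => (hw ℓ j hj).1).const_mul _, mul_sum]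
  refine sum_le_sum fun ℓ _ => ?_
  rw [integral_const_mul, mul_left_comm]
  exact mul_le_mul_of_nonneg_left (hclause ℓ) (hc ℓ)

/-- Sandwich property for weighted threshold potential functions (Lemma 3 of the paper):
for a negatively correlated unbiased randomized rounding `x` of `y`,
`E[f(x)] ≥ (1 - (1 - 1/Δ)^Δ) * f̃(y)` where `Δ` bounds the degree of the WTP function. -/
theorem wtp_sandwich
    (Ω : Type*) [MeasurableSpace Ω] (μ : Measure Ω) [IsProbabilityMeasure μ]
    (n : ℕ) (hn : 0 < n)
    (y : Fin n → ℝ) (hy : ∀ j, y j ∈ Set.Icc (0 : ℝ) 1)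
    (x : Ω → Fin n → ℝ) (hmeas : Measurable x)
    (hbin : ∀ ω j, x ω j = 0 ∨ x ω j = 1)
    (hexp : ∀ j, (∫ ω, x ω j ∂μ) = y j)
    (hneg : ∀ S : Finset (Fin n),
      (∫ ω, ∏ j ∈ S, (1 - x ω j) ∂μ) ≤ ∏ j ∈ S, (1 - y j))
    (C : Type*) [Fintype C] (Δ : ℕ) (hΔ : 1 ≤ Δ)
    (c : C → ℝ) (hc : ∀ ℓ, 0 ≤ c ℓ)
    (b : C → ℝ) (hb : ∀ ℓ, 0 < b ℓ)
    (S : C → Finset (Fin n)) (hSne : ∀ ℓ, (S ℓ).Nonempty)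
    (hScard : ∀ ℓ, (S ℓ).card ≤ Δ)
    (w : C → Fin n → ℝ) (hw : ∀ ℓ, ∀ j ∈ S ℓ, w ℓ j ∈ Set.Icc (0 : ℝ) (b ℓ)) :
    (1 - (1 - 1 / (Δ : ℝ)) ^ Δ) * ∑ ℓ, c ℓ * min (b ℓ) (∑ j ∈ S ℓ, w ℓ j * y j)
      ≤ ∫ ω, ∑ ℓ, c ℓ * min (b ℓ) (∑ j ∈ S ℓ, w ℓ j * x ω j) ∂μ :=
  wtp_sandwich_general Ω μ n y hy x hmeas hbin hneg C Δ c hc b hb S hScard w hw
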